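/- Let μ* be a global minimizer of F over ℝ^m and let μ̲ ≤ μ̄ be reals with μ̲ ≤ μ*_j ≤ μ̄ for all j. Let δ > 0 and η > 0 satisfy 2δ·log(m+1)·‖B‖₁ ≤ exp(μ̲ − η)·η². Then for every μ ∈ ℝ^m with μ̲ − η ≤ μ_j ≤ μ̄ + η for all j, one has F_δ(μ) − inf_{ν∈ℝ^m} F_δ(ν) ≤ ‖∇F_δ(μ)‖₂² / (2·exp(μ̲ − η)). -/

import Mathlib

open scoped Classical

noncomputable section

/-- Extended valuation vector of buyer `i`: index `0` gets value `1` (the convention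
`v_{i0} = 1`), index `j+1` gets `v i j`. -/
def extV {n m : ℕ} (v : Fin n → Fin m → ℝ) (i : Fin n) : Fin (m + 1) → ℝ :=
  Fin.cons 1 (v i)

/-- Extended log-price vector: index `0` gets `0` (the convention `μ₀ = 0`),
index `j+1` gets `μ j`. -/
def extMu {m : ℕ} (μ : Fin m → ℝ) : Fin (m + 1) → ℝ :=
  Fin.cons 0 μ

/-- The smoothed weight `exp((log v_{ij} − μ_j)/δ) = v_{ij}^{1/δ} · exp(−μ_j/δ)`,
with the conventions `log 0 = −∞`, `exp (−∞) = 0` (via `0 ^ (1/δ) = 0` for `δ > 0`). -/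
def wt {n m : ℕ} (v : Fin n → Fin m → ℝ) (δ : ℝ) (μ : Fin m → ℝ) (i : Fin n)
    (j : Fin (m + 1)) : ℝ :=
  extV v i j ^ (1 / δ) * Real.exp (-extMu μ j / δ)

/-- The smoothed objective `F_δ`. -/
def Fd {n m : ℕ} (B : Fin n → ℝ) (v : Fin n → Fin m → ℝ) (δ : ℝ) (μ : Fin m → ℝ) : ℝ :=
  (∑ j, Real.exp (μ j)) + δ * ∑ i, B i * Real.log (∑ j, wt v δ μ i j)

/-- The gradient of the smoothed objective `F_δ`. -/
def gradFd {n m : ℕ} (B : Fin n → ℝ) (v : Fin n → Fin m → ℝ) (δ : ℝ) (μ : Fin m → ℝ)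
    (j : Fin m) : ℝ :=
  Real.exp (μ j) - ∑ i, B i * (wt v δ μ i j.succ / ∑ j', wt v δ μ i j')

/-- The value `v_{ij} · exp(−μ_j)` (over extended indices), whose logarithm is
`log v_{ij} − μ_j` with the convention `log 0 = −∞`. -/
def valF {n m : ℕ} (v : Fin n → Fin m → ℝ) (μ : Fin m → ℝ) (i : Fin n) (j : Fin (m + 1)) : ℝ :=
  extV v i j * Real.exp (-extMu μ j)

/-- `h_i(μ) = max_{j ∈ {0,…,m}} (log v_{ij} − μ_j)`, realized as the logarithm of the
(positive) maximum of the values `v_{ij} e^{−μ_j}`. -/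
def hMax {n m : ℕ} (v : Fin n → Fin m → ℝ) (μ : Fin m → ℝ) (i : Fin n) : ℝ :=
  Real.log (Finset.univ.sup' Finset.univ_nonempty (valF v μ i))

/-- The nonsmooth objective `F`. -/
def Fobj {n m : ℕ} (B : Fin n → ℝ) (v : Fin n → Fin m → ℝ) (μ : Fin m → ℝ) : ℝ :=
  (∑ j, Real.exp (μ j)) + ∑ i, B i * hMax v μ i

/-- The active index set `𝒥_i(μ) = {j ∈ {0,…,m} : log v_{ij} − μ_j = h_i(μ)}`. -/
def activeSet {n m : ℕ} (v : Fin n → Fin m → ℝ) (μ : Fin m → ℝ) (i : Fin n) :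
    Finset (Fin (m + 1)) :=
  Finset.univ.filter fun j =>
    valF v μ i j = Finset.univ.sup' Finset.univ_nonempty (valF v μ i)

/-- The Euclidean norm on `ℝ^m`. -/
def enorm2 {m : ℕ} (x : Fin m → ℝ) : ℝ :=
  Real.sqrt (∑ j, x j ^ 2)

end

/-!
Write `L = μ̲ - η`. On the orthant `{ν | ∀ j, L ≤ ν j}` the smoothed objective `F_δ` is
`exp L`-strongly convex: the price term `∑ exp ν_j` has curvature at least `exp L` there, and each
buyer term `δ log ∑ exp (…/δ)` is convex by Jensen. Minimising the resulting quadratic lower bound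
at `μ` over `ν` gives `F_δ ν ≥ F_δ μ - ‖∇F_δ μ‖² / (2 exp L)` for every `ν` in the orthant.

A point `ν` outside the orthant does no better than the minimiser `μ*` of `F`, which lies at
distance at least `η` from the boundary: the segment from `μ*` to `ν` leaves the orthant at a point
`σ` with `‖μ* - σ‖ ≥ η`, so convexity of `F` along the segment and its strong convexity on the
orthant give `F ν ≥ F σ ≥ F μ* + exp L η² / 2`. Since `F ≤ F_δ ≤ F + δ log (m + 1) ‖B‖₁`, the
hypothesis on `δ` turns this into `F_δ ν ≥ F_δ μ*`, and `μ*` is in the orthant.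
-/

open Real Finset Filter Topology

lemma one_sub_mul_exp_add_sq_div_two_le_one {x : ℝ} (hx : 0 ≤ x) :
    (1 - x) * exp x + x ^ 2 / 2 ≤ 1 := by
  have hderiv : ∀ y : ℝ,
      HasDerivAt (fun y => (1 - y) * exp y + y ^ 2 / 2) (y * (1 - exp y)) y := fun y =>
    ((((hasDerivAt_id' y).const_sub 1).mul (hasDerivAt_exp y)).add
      ((hasDerivAt_pow 2 y).div_const 2)).congr_deriv (by norm_num; ring)
  have hanti : AntitoneOn (fun y => (1 - y) * exp y + y ^ 2 / 2) (Set.Ici 0) := by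
    refine antitoneOn_of_deriv_nonpos (convex_Ici 0)
      (fun y _ => (hderiv y).continuousAt.continuousWithinAt)
      (fun y _ => (hderiv y).differentiableAt.differentiableWithinAt) fun y hy => ?_
    rw [interior_Ici] at hy
    rw [(hderiv y).deriv]
    exact mul_nonpos_of_nonneg_of_nonpos (le_of_lt hy) (by linarith [one_le_exp (le_of_lt hy)])
  simpa using hanti Set.self_mem_Ici hx hx

lemma exp_add_mul_sub_add_sq_le {L a b : ℝ} (ha : L ≤ a) (hb : L ≤ b) :
    exp a + exp a * (b - a) + exp L / 2 * (b - a) ^ 2 ≤ exp b := by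
  rcases le_total a b with hab | hba
  · have h := quadratic_le_exp_of_nonneg (sub_nonneg.2 hab)
    have hsplit : exp b = exp a * exp (b - a) := by rw [← exp_add]; ring_nf
    nlinarith [exp_le_exp.2 ha, exp_pos a, sq_nonneg (b - a)]
  · have h := one_sub_mul_exp_add_sq_div_two_le_one (sub_nonneg.2 hba)
    have hsplit : exp a = exp b * exp (a - b) := by rw [← exp_add]; ring_nf
    nlinarith [exp_le_exp.2 hb, exp_pos b, sq_nonneg (a - b)]

lemma exp_convex_comb_add_sq_le {L a b t : ℝ} (ha : L ≤ a) (hb : L ≤ b)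
    (ht0 : 0 ≤ t) (ht1 : t ≤ 1) :
    exp ((1 - t) * a + t * b) + exp L / 2 * (t * (1 - t)) * (a - b) ^ 2 ≤
      (1 - t) * exp a + t * exp b := by
  set c := (1 - t) * a + t * b
  have hc : L ≤ c := by nlinarith
  have ha' := exp_add_mul_sub_add_sq_le hc ha
  have hb' := exp_add_mul_sub_add_sq_le hc hb
  have hac : a - c = t * (a - b) := by ring
  have hbc : b - c = -(1 - t) * (a - b) := by ring
  rw [hac] at ha'
  rw [hbc] at hb'
  nlinarith [mul_le_mul_of_nonneg_left ha' (sub_nonneg.2 ht1), mul_le_mul_of_nonneg_left hb' ht0]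

lemma neg_sum_sq_div_le_sum_mul_add_sum_sq {ι : Type*} [Fintype ι] {E : ℝ} (hE : 0 < E)
    (g d : ι → ℝ) :
    -(∑ j, g j ^ 2) / (2 * E) ≤ ∑ j, g j * d j + E / 2 * ∑ j, d j ^ 2 := by
  have h : ∀ j, -(g j ^ 2) / (2 * E) ≤ g j * d j + E / 2 * d j ^ 2 := fun j => by
    rw [div_le_iff₀ (by positivity)]
    nlinarith [sq_nonneg (E * d j + g j)]
  calc -(∑ j, g j ^ 2) / (2 * E) = ∑ j, -(g j ^ 2) / (2 * E) := by
        rw [← sum_neg_distrib, sum_div]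
    _ ≤ ∑ j, (g j * d j + E / 2 * d j ^ 2) := sum_le_sum fun j _ => h j
    _ = ∑ j, g j * d j + E / 2 * ∑ j, d j ^ 2 := by rw [sum_add_distrib, mul_sum]

lemma le_of_forall_one_sub_mul_le {a c : ℝ} (h : ∀ t ∈ Set.Ioo (0 : ℝ) 1, (1 - t) * a ≤ c) :
    a ≤ c := by
  have htend : Tendsto (fun t : ℝ => (1 - t) * a) (𝓝[>] 0) (𝓝 ((1 - 0) * a)) :=
    ((continuous_const.sub continuous_id).mul continuous_const).tendsto 0 |>.mono_left
      nhdsWithin_le_nhds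
  simpa using le_of_tendsto htend (eventually_of_mem (Ioo_mem_nhdsGT zero_lt_one) h)

lemma log_sum_add_sum_mul_div_le_log_sum_mul_exp {ι : Type*} [Fintype ι] {w : ι → ℝ}
    (hw : ∀ j, 0 ≤ w j) (hS : 0 < ∑ j, w j) (x : ι → ℝ) :
    log (∑ j, w j) + (∑ j, w j * x j) / ∑ j, w j ≤ log (∑ j, w j * exp (x j)) := by
  set S := ∑ j, w j
  have hjensen := convexOn_exp.map_sum_le (t := univ) (w := fun j => w j / S) (p := x)
    (fun j _ => div_nonneg (hw j) hS.le) (by rw [← sum_div, div_self hS.ne'])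
    (fun j _ => Set.mem_univ _)
  simp only [smul_eq_mul, div_mul_eq_mul_div, ← sum_div] at hjensen
  rw [← log_exp ((∑ j, w j * x j) / S), ← log_mul hS.ne' (exp_pos _).ne']
  exact log_le_log (by positivity) (by rwa [le_div_iff₀' hS] at hjensen)

lemma exists_convex_comb_boundary_point {ι : Type*} [Fintype ι] {x y : ι → ℝ} {L : ℝ}
    (hx : ∀ j, L ≤ x j) (hy : ∃ j, y j < L) :
    ∃ t ∈ Set.Icc (0 : ℝ) 1,
      (∀ j, L ≤ ((1 - t) • x + t • y) j) ∧ ∃ k, ((1 - t) • x + t • y) k = L := by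
  obtain ⟨j₀, hj₀⟩ := hy
  have hne : (univ : Finset ι).Nonempty := ⟨j₀, mem_univ _⟩
  set f : ℝ → ℝ := fun t => univ.inf' hne fun j => ((1 - t) • x + t • y) j
  have hf : Continuous f := Continuous.finset_inf'_apply hne fun j _ => by fun_prop
  have hf0 : L ≤ f 0 := le_inf' hne _ fun j _ => by simpa using hx j
  have hf1 : f 1 ≤ L := (inf'_le _ (mem_univ j₀)).trans (by simpa using hj₀.le)
  obtain ⟨t, ht, hft⟩ := intermediate_value_Icc' zero_le_one hf.continuousOn ⟨hf1, hf0⟩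
  obtain ⟨k, -, hk⟩ := exists_mem_eq_inf' hne fun j => ((1 - t) • x + t • y) j
  exact ⟨t, ht, fun j => hft ▸ inf'_le _ (mem_univ j), k, hk ▸ hft⟩

section LogSumRpow

variable {ι : Type*} [Fintype ι] [Nonempty ι] {a : ι → ℝ} {δ : ℝ}

lemma sup'_rpow_le_sum_rpow (ha : ∀ j, 0 ≤ a j) (p : ℝ) :
    univ.sup' univ_nonempty a ^ p ≤ ∑ j, a j ^ p := by
  obtain ⟨j₀, -, hj₀⟩ := exists_mem_eq_sup' univ_nonempty a
  rw [hj₀]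
  exact single_le_sum (fun j _ => rpow_nonneg (ha j) _) (mem_univ j₀)

lemma log_sup'_le_mul_log_sum_rpow (ha : ∀ j, 0 ≤ a j) (hM : 0 < univ.sup' univ_nonempty a)
    (hδ : 0 < δ) :
    log (univ.sup' univ_nonempty a) ≤ δ * log (∑ j, a j ^ (1 / δ)) := by
  have h := log_le_log (rpow_pos_of_pos hM _) (sup'_rpow_le_sum_rpow ha (1 / δ))
  rw [log_rpow hM] at h
  calc log (univ.sup' univ_nonempty a)
      = δ * (1 / δ * log (univ.sup' univ_nonempty a)) := by field_simp
    _ ≤ δ * log (∑ j, a j ^ (1 / δ)) := mul_le_mul_of_nonneg_left h hδ.le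

lemma mul_log_sum_rpow_le (ha : ∀ j, 0 ≤ a j) (hM : 0 < univ.sup' univ_nonempty a)
    (hδ : 0 < δ) :
    δ * log (∑ j, a j ^ (1 / δ)) ≤
      log (univ.sup' univ_nonempty a) + δ * log (Fintype.card ι) := by
  set M := univ.sup' univ_nonempty a
  have hsum : ∑ j, a j ^ (1 / δ) ≤ Fintype.card ι * M ^ (1 / δ) := by
    calc ∑ j, a j ^ (1 / δ) ≤ ∑ _j : ι, M ^ (1 / δ) := sum_le_sum fun j _ =>
          rpow_le_rpow (ha j) (le_sup' a (mem_univ j)) (by positivity)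
      _ = Fintype.card ι * M ^ (1 / δ) := by rw [sum_const, card_univ, nsmul_eq_mul]
  have h := log_le_log ((rpow_pos_of_pos hM _).trans_le (sup'_rpow_le_sum_rpow ha (1 / δ))) hsum
  rw [log_mul (by positivity) (rpow_pos_of_pos hM _).ne', log_rpow hM] at h
  calc δ * log (∑ j, a j ^ (1 / δ))
      ≤ δ * (log (Fintype.card ι) + 1 / δ * log M) := mul_le_mul_of_nonneg_left h hδ.le
    _ = log M + δ * log (Fintype.card ι) := by field_simp; ring

end LogSumRpow

section Market

variable {n m : ℕ} {B : Fin n → ℝ} {v : Fin n → Fin m → ℝ} {δ : ℝ}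

lemma extV_nonneg (hv : ∀ i j, 0 ≤ v i j) (i : Fin n) (j : Fin (m + 1)) : 0 ≤ extV v i j :=
  Fin.cases (by simp [extV]) (fun j => by simpa [extV] using hv i j) j

lemma valF_nonneg (hv : ∀ i j, 0 ≤ v i j) (μ : Fin m → ℝ) (i : Fin n) (j : Fin (m + 1)) :
    0 ≤ valF v μ i j :=
  mul_nonneg (extV_nonneg hv i j) (exp_nonneg _)

lemma sup'_valF_pos (μ : Fin m → ℝ) (i : Fin n) :
    0 < univ.sup' univ_nonempty (valF v μ i) := by
  have h := le_sup' (valF v μ i) (mem_univ 0)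
  rw [show valF v μ i 0 = 1 by simp [valF, extV, extMu]] at h
  exact zero_lt_one.trans_le h

lemma wt_eq_valF_rpow (hv : ∀ i j, 0 ≤ v i j) (μ : Fin m → ℝ) (i : Fin n) (j : Fin (m + 1)) :
    wt v δ μ i j = valF v μ i j ^ (1 / δ) := by
  rw [valF, mul_rpow (extV_nonneg hv i j) (exp_nonneg _), ← exp_mul, wt, neg_mul, one_div,
    ← div_eq_mul_inv, neg_div]

lemma wt_nonneg (hv : ∀ i j, 0 ≤ v i j) (μ : Fin m → ℝ) (i : Fin n) (j : Fin (m + 1)) :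
    0 ≤ wt v δ μ i j :=
  mul_nonneg (rpow_nonneg (extV_nonneg hv i j) _) (exp_nonneg _)

lemma sum_wt_pos (hv : ∀ i j, 0 ≤ v i j) (μ : Fin m → ℝ) (i : Fin n) :
    0 < ∑ j, wt v δ μ i j :=
  zero_lt_one.trans_le <| by
    simpa [wt, extV, extMu] using single_le_sum (fun j _ => wt_nonneg hv μ i j) (mem_univ 0)

lemma hMax_le_mul_log_sum_wt (hv : ∀ i j, 0 ≤ v i j) (hδ : 0 < δ) (μ : Fin m → ℝ) (i : Fin n) :
    hMax v μ i ≤ δ * log (∑ j, wt v δ μ i j) := by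
  simp only [hMax, wt_eq_valF_rpow hv]
  exact log_sup'_le_mul_log_sum_rpow (valF_nonneg hv μ i) (sup'_valF_pos μ i) hδ

lemma mul_log_sum_wt_le_hMax_add (hv : ∀ i j, 0 ≤ v i j) (hδ : 0 < δ) (μ : Fin m → ℝ)
    (i : Fin n) :
    δ * log (∑ j, wt v δ μ i j) ≤ hMax v μ i + δ * log (m + 1) := by
  simpa [hMax, wt_eq_valF_rpow hv] using
    mul_log_sum_rpow_le (valF_nonneg hv μ i) (sup'_valF_pos μ i) hδ

lemma Fd_eq_sum_add_sum (μ : Fin m → ℝ) :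
    Fd B v δ μ = ∑ j, exp (μ j) + ∑ i, B i * (δ * log (∑ j, wt v δ μ i j)) := by
  simp only [Fd, mul_sum, mul_left_comm δ]

lemma Fobj_le_Fd (hB : ∀ i, 0 ≤ B i) (hv : ∀ i j, 0 ≤ v i j) (hδ : 0 < δ) (μ : Fin m → ℝ) :
    Fobj B v μ ≤ Fd B v δ μ := by
  rw [Fobj, Fd_eq_sum_add_sum]
  gcongr with i
  · exact hB i
  · exact hMax_le_mul_log_sum_wt hv hδ μ i

lemma Fd_le_Fobj_add (hB : ∀ i, 0 ≤ B i) (hv : ∀ i j, 0 ≤ v i j) (hδ : 0 < δ)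
    (μ : Fin m → ℝ) :
    Fd B v δ μ ≤ Fobj B v μ + δ * log (m + 1) * ∑ i, B i := by
  have h : ∑ i, B i * (δ * log (∑ j, wt v δ μ i j)) ≤
      ∑ i, B i * (hMax v μ i + δ * log (m + 1)) :=
    sum_le_sum fun i _ => mul_le_mul_of_nonneg_left (mul_log_sum_wt_le_hMax_add hv hδ μ i) (hB i)
  simp only [mul_add, sum_add_distrib, ← sum_mul] at h
  rw [Fobj, Fd_eq_sum_add_sum]
  linarith [mul_comm (∑ i, B i) (δ * log (m + 1))]

lemma wt_eq_wt_mul_exp (μ ν : Fin m → ℝ) (i : Fin n) (j : Fin (m + 1)) :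
    wt v δ ν i j = wt v δ μ i j * exp ((extMu μ j - extMu ν j) / δ) := by
  rw [wt, wt, mul_assoc, ← exp_add]
  ring_nf

lemma mul_log_sum_wt_sub_le (hv : ∀ i j, 0 ≤ v i j) (hδ : 0 < δ) (μ ν : Fin m → ℝ)
    (i : Fin n) :
    δ * log (∑ j, wt v δ μ i j) -
        ∑ j : Fin m, wt v δ μ i j.succ / (∑ j', wt v δ μ i j') * (ν j - μ j) ≤
      δ * log (∑ j, wt v δ ν i j) := by
  set S := ∑ j, wt v δ μ i j
  have h := log_sum_add_sum_mul_div_le_log_sum_mul_exp (wt_nonneg (δ := δ) hv μ i)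
    (sum_wt_pos hv μ i) fun j => (extMu μ j - extMu ν j) / δ
  have hnum : ∑ j, wt v δ μ i j * ((extMu μ j - extMu ν j) / δ) =
      ∑ j : Fin m, wt v δ μ i j.succ * ((μ j - ν j) / δ) := by
    simp [Fin.sum_univ_succ, extMu]
  rw [hnum, sum_congr rfl fun j _ => (wt_eq_wt_mul_exp μ ν i j).symm] at h
  have hmean : δ * ((∑ j : Fin m, wt v δ μ i j.succ * ((μ j - ν j) / δ)) / S) =
      -∑ j : Fin m, wt v δ μ i j.succ / S * (ν j - μ j) := by
    rw [sum_div, mul_sum, ← sum_neg_distrib]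
    refine sum_congr rfl fun j _ => ?_
    field_simp
    ring
  nlinarith [mul_le_mul_of_nonneg_left h hδ.le]

lemma sum_gradFd_mul (μ ν : Fin m → ℝ) :
    ∑ j, gradFd B v δ μ j * (ν j - μ j) =
      ∑ j, exp (μ j) * (ν j - μ j) -
        ∑ i, B i * ∑ j : Fin m, wt v δ μ i j.succ / (∑ j', wt v δ μ i j') * (ν j - μ j) := by
  simp only [gradFd, sub_mul, sum_sub_distrib, sum_mul, mul_sum, mul_assoc]
  rw [sum_comm (γ := Fin m)]

lemma Fd_add_sum_gradFd_mul_add_sq_le (hB : ∀ i, 0 ≤ B i) (hv : ∀ i j, 0 ≤ v i j)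
    (hδ : 0 < δ) {L : ℝ} {μ ν : Fin m → ℝ} (hμ : ∀ j, L ≤ μ j) (hν : ∀ j, L ≤ ν j) :
    Fd B v δ μ + ∑ j, gradFd B v δ μ j * (ν j - μ j) + exp L / 2 * ∑ j, (ν j - μ j) ^ 2 ≤
      Fd B v δ ν := by
  have hexp : ∑ j, exp (μ j) + ∑ j, exp (μ j) * (ν j - μ j) +
      exp L / 2 * ∑ j, (ν j - μ j) ^ 2 ≤ ∑ j, exp (ν j) := by
    rw [mul_sum, ← sum_add_distrib, ← sum_add_distrib]
    exact sum_le_sum fun j _ => exp_add_mul_sub_add_sq_le (hμ j) (hν j)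
  have hbuyers : ∑ i, B i * (δ * log (∑ j, wt v δ μ i j)) -
        ∑ i, B i * ∑ j : Fin m, wt v δ μ i j.succ / (∑ j', wt v δ μ i j') * (ν j - μ j) ≤
      ∑ i, B i * (δ * log (∑ j, wt v δ ν i j)) := by
    rw [← sum_sub_distrib]
    refine sum_le_sum fun i _ => ?_
    rw [← mul_sub]
    exact mul_le_mul_of_nonneg_left (mul_log_sum_wt_sub_le hv hδ μ ν i) (hB i)
  rw [Fd_eq_sum_add_sum, Fd_eq_sum_add_sum, sum_gradFd_mul]
  linarith

lemma Fd_sub_sum_sq_gradFd_div_le (hB : ∀ i, 0 ≤ B i) (hv : ∀ i j, 0 ≤ v i j) (hδ : 0 < δ)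
    {L : ℝ} {μ ν : Fin m → ℝ} (hμ : ∀ j, L ≤ μ j) (hν : ∀ j, L ≤ ν j) :
    Fd B v δ μ - (∑ j, gradFd B v δ μ j ^ 2) / (2 * exp L) ≤ Fd B v δ ν := by
  have h := neg_sum_sq_div_le_sum_mul_add_sum_sq (exp_pos L) (gradFd B v δ μ)
    fun j => ν j - μ j
  rw [neg_div] at h
  linarith [Fd_add_sum_gradFd_mul_add_sq_le hB hv hδ hμ hν]

lemma extMu_convex_comb (t : ℝ) (x y : Fin m → ℝ) :
    extMu ((1 - t) • x + t • y) = (1 - t) • extMu x + t • extMu y := by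
  ext j
  cases j using Fin.cases <;> simp [extMu]

lemma valF_convex_comb (hv : ∀ i j, 0 ≤ v i j) (t : ℝ) (x y : Fin m → ℝ) (i : Fin n)
    (j : Fin (m + 1)) :
    valF v ((1 - t) • x + t • y) i j = valF v x i j ^ (1 - t) * valF v y i j ^ t := by
  have hV : extV v i j ^ (1 - t) * extV v i j ^ t = extV v i j := by
    rw [← rpow_add' (extV_nonneg hv i j) (by simp), sub_add_cancel, rpow_one]
  rw [valF, valF, valF, mul_rpow (extV_nonneg hv i j) (exp_nonneg _),
    mul_rpow (extV_nonneg hv i j) (exp_nonneg _), ← exp_mul, ← exp_mul, mul_mul_mul_comm, hV,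
    ← exp_add, extMu_convex_comb]
  simp only [Pi.add_apply, Pi.smul_apply, smul_eq_mul]
  ring_nf

lemma hMax_convex_comb_le (hv : ∀ i j, 0 ≤ v i j) {t : ℝ} (ht0 : 0 ≤ t) (ht1 : t ≤ 1)
    (x y : Fin m → ℝ) (i : Fin n) :
    hMax v ((1 - t) • x + t • y) i ≤ (1 - t) * hMax v x i + t * hMax v y i := by
  have hx := sup'_valF_pos x i (v := v)
  have hy := sup'_valF_pos y i (v := v)
  have hle : univ.sup' univ_nonempty (valF v ((1 - t) • x + t • y) i) ≤
      univ.sup' univ_nonempty (valF v x i) ^ (1 - t) *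
        univ.sup' univ_nonempty (valF v y i) ^ t := by
    refine sup'_le _ _ fun j _ => ?_
    rw [valF_convex_comb hv]
    exact mul_le_mul
      (rpow_le_rpow (valF_nonneg hv x i j) (le_sup' _ (mem_univ j)) (sub_nonneg.2 ht1))
      (rpow_le_rpow (valF_nonneg hv y i j) (le_sup' _ (mem_univ j)) ht0)
      (rpow_nonneg (valF_nonneg hv y i j) _) (rpow_nonneg hx.le _)
  have h := log_le_log (sup'_valF_pos _ i) hle
  rwa [log_mul (rpow_pos_of_pos hx _).ne' (rpow_pos_of_pos hy _).ne', log_rpow hx,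
    log_rpow hy] at h

lemma sum_mul_hMax_convex_comb_le (hB : ∀ i, 0 ≤ B i) (hv : ∀ i j, 0 ≤ v i j) {t : ℝ}
    (ht0 : 0 ≤ t) (ht1 : t ≤ 1) (x y : Fin m → ℝ) :
    ∑ i, B i * hMax v ((1 - t) • x + t • y) i ≤
      (1 - t) * ∑ i, B i * hMax v x i + t * ∑ i, B i * hMax v y i := by
  rw [mul_sum, mul_sum, ← sum_add_distrib]
  refine sum_le_sum fun i _ => ?_
  calc B i * hMax v ((1 - t) • x + t • y) i
      ≤ B i * ((1 - t) * hMax v x i + t * hMax v y i) :=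
        mul_le_mul_of_nonneg_left (hMax_convex_comb_le hv ht0 ht1 x y i) (hB i)
    _ = (1 - t) * (B i * hMax v x i) + t * (B i * hMax v y i) := by ring

lemma Fobj_convex_comb_le (hB : ∀ i, 0 ≤ B i) (hv : ∀ i j, 0 ≤ v i j) {t : ℝ}
    (ht0 : 0 ≤ t) (ht1 : t ≤ 1) (x y : Fin m → ℝ) :
    Fobj B v ((1 - t) • x + t • y) ≤ (1 - t) * Fobj B v x + t * Fobj B v y := by
  have hexp : ∑ j, exp (((1 - t) • x + t • y) j) ≤
      (1 - t) * ∑ j, exp (x j) + t * ∑ j, exp (y j) := by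
    rw [mul_sum, mul_sum, ← sum_add_distrib]
    exact sum_le_sum fun j _ =>
      convexOn_exp.2 (Set.mem_univ _) (Set.mem_univ _) (sub_nonneg.2 ht1) ht0 (by ring)
  rw [Fobj, Fobj, Fobj]
  linarith [sum_mul_hMax_convex_comb_le hB hv ht0 ht1 x y]

lemma Fobj_convex_comb_add_sq_le (hB : ∀ i, 0 ≤ B i) (hv : ∀ i j, 0 ≤ v i j) {t : ℝ}
    (ht0 : 0 ≤ t) (ht1 : t ≤ 1) {L : ℝ} {x y : Fin m → ℝ} (hx : ∀ j, L ≤ x j)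
    (hy : ∀ j, L ≤ y j) :
    Fobj B v ((1 - t) • x + t • y) + exp L / 2 * (t * (1 - t)) * ∑ j, (x j - y j) ^ 2 ≤
      (1 - t) * Fobj B v x + t * Fobj B v y := by
  have hexp : ∑ j, exp (((1 - t) • x + t • y) j) +
      exp L / 2 * (t * (1 - t)) * ∑ j, (x j - y j) ^ 2 ≤
      (1 - t) * ∑ j, exp (x j) + t * ∑ j, exp (y j) := by
    rw [mul_sum, mul_sum, mul_sum, ← sum_add_distrib, ← sum_add_distrib]
    exact sum_le_sum fun j _ => exp_convex_comb_add_sq_le (hx j) (hy j) ht0 ht1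
  rw [Fobj, Fobj, Fobj]
  linarith [sum_mul_hMax_convex_comb_le hB hv ht0 ht1 x y]

lemma Fobj_add_sum_sq_le (hB : ∀ i, 0 ≤ B i) (hv : ∀ i j, 0 ≤ v i j) {μs : Fin m → ℝ}
    (hμs : ∀ ν, Fobj B v μs ≤ Fobj B v ν) {L : ℝ} (hμsL : ∀ j, L ≤ μs j) {σ : Fin m → ℝ}
    (hσL : ∀ j, L ≤ σ j) :
    Fobj B v μs + exp L / 2 * ∑ j, (μs j - σ j) ^ 2 ≤ Fobj B v σ := by
  suffices exp L / 2 * ∑ j, (μs j - σ j) ^ 2 ≤ Fobj B v σ - Fobj B v μs by linarith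
  refine le_of_forall_one_sub_mul_le fun t ht => ?_
  have hcomb := Fobj_convex_comb_add_sq_le hB hv ht.1.le ht.2.le hμsL hσL
  have hmin := hμs ((1 - t) • μs + t • σ)
  refine le_of_mul_le_mul_left ?_ ht.1
  nlinarith

lemma Fd_le_Fd_of_exists_lt (hB : ∀ i, 0 ≤ B i) (hv : ∀ i j, 0 ≤ v i j) (hδ : 0 < δ)
    {μs : Fin m → ℝ} (hμs : ∀ ν, Fobj B v μs ≤ Fobj B v ν) {L η : ℝ} (hη : 0 ≤ η)
    (hμsL : ∀ j, L + η ≤ μs j) (hcond : 2 * δ * log (m + 1) * ∑ i, B i ≤ exp L * η ^ 2)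
    {ν : Fin m → ℝ} (hν : ∃ j, ν j < L) :
    Fd B v δ μs ≤ Fd B v δ ν := by
  have hμsL' : ∀ j, L ≤ μs j := fun j => by linarith [hμsL j]
  obtain ⟨t, ⟨ht0, ht1⟩, hσL, k, hk⟩ := exists_convex_comb_boundary_point hμsL' hν
  set σ := (1 - t) • μs + t • ν
  have hdist : η ^ 2 ≤ ∑ j, (μs j - σ j) ^ 2 :=
    (pow_le_pow_left₀ hη (by linarith [hμsL k]) 2).trans
      (single_le_sum (fun j _ => sq_nonneg (μs j - σ j)) (mem_univ k))
  calc Fd B v δ μs ≤ Fobj B v μs + δ * log (m + 1) * ∑ i, B i := Fd_le_Fobj_add hB hv hδ μs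
    _ ≤ Fobj B v μs + exp L / 2 * ∑ j, (μs j - σ j) ^ 2 := by nlinarith [exp_pos L]
    _ ≤ Fobj B v σ := Fobj_add_sum_sq_le hB hv hμs hμsL' hσL
    _ ≤ Fobj B v ν := by nlinarith [Fobj_convex_comb_le hB hv ht0 ht1 μs ν, hμs ν]
    _ ≤ Fd B v δ ν := Fobj_le_Fd hB hv hδ ν

end Market

theorem fdelta_gradient_dominance_general
    (n m : ℕ)
    (B : Fin n → ℝ) (hB : ∀ i, 0 < B i)
    (v : Fin n → Fin m → ℝ) (hv : ∀ i j, 0 ≤ v i j)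
    (μs : Fin m → ℝ) (hμs : ∀ ν : Fin m → ℝ, Fobj B v μs ≤ Fobj B v ν)
    (lo hi : ℝ) (hbox : ∀ j, lo ≤ μs j ∧ μs j ≤ hi)
    (δ η : ℝ) (hδ : 0 < δ) (hη : 0 < η)
    (hcond : 2 * δ * Real.log (m + 1) * (∑ i, B i) ≤ Real.exp (lo - η) * η ^ 2)
    (μ : Fin m → ℝ) (hμ : ∀ j, lo - η ≤ μ j ∧ μ j ≤ hi + η) :
    Fd B v δ μ - (⨅ ν : Fin m → ℝ, Fd B v δ ν) ≤
      enorm2 (gradFd B v δ μ) ^ 2 / (2 * Real.exp (lo - η)) := by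
  have hB' : ∀ i, 0 ≤ B i := fun i => (hB i).le
  have hμL : ∀ j, lo - η ≤ μ j := fun j => (hμ j).1
  have hμsL : ∀ j, lo - η + η ≤ μs j := fun j => by linarith [(hbox j).1]
  have hbound : ∀ ν, Fd B v δ μ - (∑ j, gradFd B v δ μ j ^ 2) / (2 * exp (lo - η)) ≤
      Fd B v δ ν := by
    intro ν
    by_cases hν : ∀ j, lo - η ≤ ν j
    · exact Fd_sub_sum_sq_gradFd_div_le hB' hv hδ hμL hν
    · push Not at hν
      exact (Fd_sub_sum_sq_gradFd_div_le hB' hv hδ hμL fun j => by linarith [hμsL j]).trans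
        (Fd_le_Fd_of_exists_lt hB' hv hδ hμs hη.le hμsL hcond hν)
  rw [enorm2, sq_sqrt (sum_nonneg fun j _ => sq_nonneg _)]
  linarith [le_ciInf hbound]

/-- gradient-dominance (Polyak–Łojasiewicz) bound for `F_δ` on the
relaxed box, with strong convexity modulus `exp(μ̲ − η)`. -/
theorem fdelta_gradient_dominance
    (n m : ℕ) (hn : 1 ≤ n) (hm : 1 ≤ m)
    (B : Fin n → ℝ) (hB : ∀ i, 0 < B i)
    (v : Fin n → Fin m → ℝ) (hv : ∀ i j, 0 ≤ v i j)
    (μs : Fin m → ℝ) (hμs : ∀ ν : Fin m → ℝ, Fobj B v μs ≤ Fobj B v ν)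
    (lo hi : ℝ) (hlohi : lo ≤ hi) (hbox : ∀ j, lo ≤ μs j ∧ μs j ≤ hi)
    (δ η : ℝ) (hδ : 0 < δ) (hη : 0 < η)
    (hcond : 2 * δ * Real.log (m + 1) * (∑ i, B i) ≤ Real.exp (lo - η) * η ^ 2)
    (μ : Fin m → ℝ) (hμ : ∀ j, lo - η ≤ μ j ∧ μ j ≤ hi + η) :
    Fd B v δ μ - (⨅ ν : Fin m → ℝ, Fd B v δ ν) ≤
      enorm2 (gradFd B v δ μ) ^ 2 / (2 * Real.exp (lo - η)) :=
  fdelta_gradient_dominance_general n m B hB v hv μs hμs lo hi hbox δ η hδ hη hcond μ hμ
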